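/- arXiv:1911.12002 — 6 statements merged into one kernel-verified Lean document; each statement's English description precedes it below -/
import Mathlib

section
/- Let w and B be bilinear functions on ℝ², set h := w − B, and let C be the cell of size Δx×Δy (Δx, Δy > 0) centered at (x₀, y₀). Then the cell average of h over C satisfies (1/(Δx·Δy)) ∬_C h = (1/4)[ (1/2)(h(x₀−Δx/2, y₀−Δy/4) + h(x₀−Δx/2, y₀+Δy/4)) + h(x₀+Δx/2, y₀) + h(x₀, y₀−Δy/2) + h(x₀, y₀+Δy/2) ]. -/
lemma lin_int (a b p q : ℝ) :
    ∫ y in p..q, (a + b * y) = a * (q - p) + b * (q ^ 2 - p ^ 2) / 2 := by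
  have h1 : ∫ y in p..q, (a + b * y) =
      (∫ y in p..q, a) + ∫ y in p..q, b * y := by
    apply intervalIntegral.integral_add
    · exact intervalIntegrable_const
    · exact (intervalIntegral.intervalIntegrable_id.const_mul b)
  rw [h1, intervalIntegral.integral_const, intervalIntegral.integral_const_mul,
    integral_id, smul_eq_mul]
  ring

/-- For bilinear water surface `w` and bottom topography `B`, the cell average
of the depth `h = w - B` over the cell equals the convex combination of its
point values at the east midpoint, the two west quarter points, and the south
and north midpoints of the cell. -/
theorem depth_cell_average_convex_combination
    (aw bw cw dw aB bB cB dB x₀ y₀ Δx Δy : ℝ) (hΔx : 0 < Δx) (hΔy : 0 < Δy)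
    (w B h : ℝ → ℝ → ℝ)
    (hw : ∀ x y, w x y = aw + bw * x + cw * y + dw * x * y)
    (hB : ∀ x y, B x y = aB + bB * x + cB * y + dB * x * y)
    (hh : ∀ x y, h x y = w x y - B x y) :
    (1 / (Δx * Δy)) *
      ∫ x in (x₀ - Δx / 2)..(x₀ + Δx / 2),
        ∫ y in (y₀ - Δy / 2)..(y₀ + Δy / 2), h x y
      = (1 / 4) * ((1 / 2) * (h (x₀ - Δx / 2) (y₀ - Δy / 4)
            + h (x₀ - Δx / 2) (y₀ + Δy / 4))
          + h (x₀ + Δx / 2) y₀ + h x₀ (y₀ - Δy / 2) + h x₀ (y₀ + Δy / 2)) := by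
  have key : ∀ x y, h x y = (aw - aB) + (bw - bB) * x + (cw - cB) * y
      + (dw - dB) * (x * y) := by
    intro x y; rw [hh, hw, hB]; ring
  have inner : ∀ x, (∫ y in (y₀ - Δy / 2)..(y₀ + Δy / 2), h x y)
      = (((aw - aB) + (bw - bB) * x) + ((cw - cB) + (dw - dB) * x) * y₀) * Δy := by
    intro x
    calc (∫ y in (y₀ - Δy / 2)..(y₀ + Δy / 2), h x y)
        = ∫ y in (y₀ - Δy / 2)..(y₀ + Δy / 2),
            (((aw - aB) + (bw - bB) * x) + ((cw - cB) + (dw - dB) * x) * y) := by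
          apply intervalIntegral.integral_congr
          intro y _; rw [key]; ring
      _ = _ := by rw [lin_int]; ring
  rw [intervalIntegral.integral_congr (g := fun x =>
        ((((aw - aB) + (cw - cB) * y₀) * Δy)
        + (((bw - bB) + (dw - dB) * y₀) * Δy) * x)) ?_]
  · rw [lin_int]
    simp only [key]
    field_simp
    ring
  · intro x _
    simp only []; rw [inner]; ring
end

section
/- (Case 1 positivity-preserving correction.) Let B_NE, B_SE, B_NW, B_SW ∈ ℝ, set B_c := (B_NE + B_SE + B_NW + B_SW)/4, and let w̄ ∈ ℝ with w̄ ≥ B_c. Define corrected corner values ẘ_NE := B_NE, ẘ_SE := B_SE + (4/3)(w̄ − B_c), ẘ_NW := B_NW + (4/3)(w̄ − B_c), ẘ_SW := B_SW + (4/3)(w̄ − B_c). Then (i) (ẘ_NE + ẘ_SE + ẘ_NW + ẘ_SW)/4 = w̄, and (ii) ẘ_NE ≥ B_NE, ẘ_SE ≥ B_SE, ẘ_NW ≥ B_NW, ẘ_SW ≥ B_SW. Consequently, if ẘ and B̃ are bilinear functions on a cell C of size Δx×Δy centered at (x₀,y₀) taking the values ẘ_NE, ẘ_SE, ẘ_NW,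 ẘ_SW and B_NE, B_SE, B_NW, B_SW respectively at the corresponding corners of C, then the cell average of ẘ over C equals w̄ and ẘ(x,y) ≥ B̃(x,y) for all (x,y) ∈ C. -/
/-- Integral of an affine function over an interval. -/
lemma int_affine (p q l u : ℝ) :
    (∫ t in l..u, (p + q * t)) = p * (u - l) + q * ((u ^ 2 - l ^ 2) / 2) := by
  have h1 : IntervalIntegrable (fun _ : ℝ => p) MeasureTheory.volume l u :=
    intervalIntegrable_const
  have h2 : IntervalIntegrable (fun t : ℝ => q * t) MeasureTheory.volume l u :=
    (continuous_const.mul continuous_id).intervalIntegrable l u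
  rw [intervalIntegral.integral_add h1 h2, intervalIntegral.integral_const,
    intervalIntegral.integral_const_mul, integral_id, smul_eq_mul]
  ring

/-- An affine function nonnegative at both endpoints is nonnegative on the segment. -/
lemma affine_nonneg (p q t1 t2 t : ℝ) (h1 : 0 ≤ p + q * t1) (h2 : 0 ≤ p + q * t2)
    (hl : t1 ≤ t) (hr : t ≤ t2) : 0 ≤ p + q * t := by
  rcases le_or_gt 0 q with h | h
  · nlinarith
  · nlinarith

/-- Case 1 positivity-preserving correction: one violated corner. The corrected
corner values are conservative and dominate the bottom corner values;
consequently the corrected bilinear piece has cell average `wbar` and lies above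
the bilinear bottom reconstruction on the whole cell. -/
theorem case1_positivity_correction
    (BNE BSE BNW BSW Bc wbar : ℝ)
    (hBc : Bc = (BNE + BSE + BNW + BSW) / 4)
    (hwbar : Bc ≤ wbar)
    (wNE wSE wNW wSW : ℝ)
    (hwNE : wNE = BNE)
    (hwSE : wSE = BSE + (4 / 3) * (wbar - Bc))
    (hwNW : wNW = BNW + (4 / 3) * (wbar - Bc))
    (hwSW : wSW = BSW + (4 / 3) * (wbar - Bc))
    (x₀ y₀ Δx Δy : ℝ) (hΔx : 0 < Δx) (hΔy : 0 < Δy)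
    (aw bw cw dw aB bB cB dB : ℝ)
    (W Bt : ℝ → ℝ → ℝ)
    (hW : ∀ x y, W x y = aw + bw * x + cw * y + dw * x * y)
    (hBt : ∀ x y, Bt x y = aB + bB * x + cB * y + dB * x * y)
    (hWNE : W (x₀ + Δx / 2) (y₀ + Δy / 2) = wNE)
    (hWSE : W (x₀ + Δx / 2) (y₀ - Δy / 2) = wSE)
    (hWNW : W (x₀ - Δx / 2) (y₀ + Δy / 2) = wNW)
    (hWSW : W (x₀ - Δx / 2) (y₀ - Δy / 2) = wSW)
    (hBtNE : Bt (x₀ + Δx / 2) (y₀ + Δy / 2) = BNE)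
    (hBtSE : Bt (x₀ + Δx / 2) (y₀ - Δy / 2) = BSE)
    (hBtNW : Bt (x₀ - Δx / 2) (y₀ + Δy / 2) = BNW)
    (hBtSW : Bt (x₀ - Δx / 2) (y₀ - Δy / 2) = BSW) :
    (wNE + wSE + wNW + wSW) / 4 = wbar ∧
    BNE ≤ wNE ∧ BSE ≤ wSE ∧ BNW ≤ wNW ∧ BSW ≤ wSW ∧
    (1 / (Δx * Δy)) *
      (∫ x in (x₀ - Δx / 2)..(x₀ + Δx / 2),
        ∫ y in (y₀ - Δy / 2)..(y₀ + Δy / 2), W x y) = wbar ∧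
    (∀ x y, x ∈ Set.Icc (x₀ - Δx / 2) (x₀ + Δx / 2) →
      y ∈ Set.Icc (y₀ - Δy / 2) (y₀ + Δy / 2) → Bt x y ≤ W x y) := by
  have hsum : (wNE + wSE + wNW + wSW) / 4 = wbar := by
    rw [hwNE, hwSE, hwNW, hwSW, hBc]; ring
  have hdiff : 0 ≤ (4 / 3 : ℝ) * (wbar - Bc) := by
    have : 0 ≤ wbar - Bc := by linarith
    positivity
  refine ⟨hsum, le_of_eq hwNE.symm, by linarith, by linarith, by linarith, ?_, ?_⟩
  · -- cell average
    have e1 := hWNE; rw [hW] at e1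
    have e2 := hWSE; rw [hW] at e2
    have e3 := hWNW; rw [hW] at e3
    have e4 := hWSW; rw [hW] at e4
    have hc : aw + bw * x₀ + cw * y₀ + dw * (x₀ * y₀) = wbar := by
      linear_combination (e1 + e2 + e3 + e4) / 4 + hsum
    have hin : ∀ x : ℝ, (∫ y in (y₀ - Δy / 2)..(y₀ + Δy / 2), W x y) =
        (aw + bw * x) * ((y₀ + Δy / 2) - (y₀ - Δy / 2)) +
        (cw + dw * x) * (((y₀ + Δy / 2) ^ 2 - (y₀ - Δy / 2) ^ 2) / 2) := by
      intro x
      have : (∫ y in (y₀ - Δy / 2)..(y₀ + Δy / 2), W x y) =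
          ∫ y in (y₀ - Δy / 2)..(y₀ + Δy / 2), ((aw + bw * x) + (cw + dw * x) * y) := by
        apply intervalIntegral.integral_congr
        intro y _
        rw [hW]; ring
      rw [this, int_affine]
    have hout : (∫ x in (x₀ - Δx / 2)..(x₀ + Δx / 2),
        ∫ y in (y₀ - Δy / 2)..(y₀ + Δy / 2), W x y) = Δx * Δy * wbar := by
      have h1 : (∫ x in (x₀ - Δx / 2)..(x₀ + Δx / 2),
          ∫ y in (y₀ - Δy / 2)..(y₀ + Δy / 2), W x y) =
          ∫ x in (x₀ - Δx / 2)..(x₀ + Δx / 2),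
            ((aw * Δy + cw * (y₀ * Δy)) + (bw * Δy + dw * (y₀ * Δy)) * x) := by
        apply intervalIntegral.integral_congr
        intro x _
        show (∫ y in (y₀ - Δy / 2)..(y₀ + Δy / 2), W x y) =
          aw * Δy + cw * (y₀ * Δy) + (bw * Δy + dw * (y₀ * Δy)) * x
        rw [hin x]; ring
      rw [h1, int_affine]
      linear_combination (Δx * Δy) * hc
    rw [hout]
    field_simp
  · -- pointwise domination
    intro x y hx hy
    have hD : ∀ u v : ℝ, W u v - Bt u v =
        ((aw - aB) + (cw - cB) * v) + ((bw - bB) + (dw - dB) * v) * u := by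
      intro u v; rw [hW, hBt]; ring
    have cNE : 0 ≤ W (x₀ + Δx / 2) (y₀ + Δy / 2) - Bt (x₀ + Δx / 2) (y₀ + Δy / 2) := by
      rw [hWNE, hBtNE]; linarith
    have cSE : 0 ≤ W (x₀ + Δx / 2) (y₀ - Δy / 2) - Bt (x₀ + Δx / 2) (y₀ - Δy / 2) := by
      rw [hWSE, hBtSE]; linarith
    have cNW : 0 ≤ W (x₀ - Δx / 2) (y₀ + Δy / 2) - Bt (x₀ - Δx / 2) (y₀ + Δy / 2) := by
      rw [hWNW, hBtNW]; linarith
    have cSW : 0 ≤ W (x₀ - Δx / 2) (y₀ - Δy / 2) - Bt (x₀ - Δx / 2) (y₀ - Δy / 2) := by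
      rw [hWSW, hBtSW]; linarith
    -- first interpolate in y at the two x-extremes
    have hE : 0 ≤ W (x₀ + Δx / 2) y - Bt (x₀ + Δx / 2) y := by
      rw [hD]
      have h1 : 0 ≤ ((aw - aB) + (bw - bB) * (x₀ + Δx / 2)) +
          ((cw - cB) + (dw - dB) * (x₀ + Δx / 2)) * (y₀ - Δy / 2) := by
        have := cSE; rw [hD] at this; linarith [this]
      have h2 : 0 ≤ ((aw - aB) + (bw - bB) * (x₀ + Δx / 2)) +
          ((cw - cB) + (dw - dB) * (x₀ + Δx / 2)) * (y₀ + Δy / 2) := by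
        have := cNE; rw [hD] at this; linarith [this]
      have := affine_nonneg _ _ _ _ y h1 h2 hy.1 hy.2
      linarith [this]
    have hWs : 0 ≤ W (x₀ - Δx / 2) y - Bt (x₀ - Δx / 2) y := by
      rw [hD]
      have h1 : 0 ≤ ((aw - aB) + (bw - bB) * (x₀ - Δx / 2)) +
          ((cw - cB) + (dw - dB) * (x₀ - Δx / 2)) * (y₀ - Δy / 2) := by
        have := cSW; rw [hD] at this; linarith [this]
      have h2 : 0 ≤ ((aw - aB) + (bw - bB) * (x₀ - Δx / 2)) +
          ((cw - cB) + (dw - dB) * (x₀ - Δx / 2)) * (y₀ + Δy / 2) := by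
        have := cNW; rw [hD] at this; linarith [this]
      have := affine_nonneg _ _ _ _ y h1 h2 hy.1 hy.2
      linarith [this]
    -- now interpolate in x
    have hfinal : 0 ≤ W x y - Bt x y := by
      rw [hD]
      have h1 : 0 ≤ ((aw - aB) + (cw - cB) * y) +
          ((bw - bB) + (dw - dB) * y) * (x₀ - Δx / 2) := by
        have := hWs; rw [hD] at this; linarith [this]
      have h2 : 0 ≤ ((aw - aB) + (cw - cB) * y) +
          ((bw - bB) + (dw - dB) * y) * (x₀ + Δx / 2) := by
        have := hE; rw [hD] at this; linarith [this]
      exact affine_nonneg _ _ _ _ x h1 h2 hx.1 hx.2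
    linarith
end

section
/- (Case 2 positivity-preserving correction.) Let B_NE, B_SE, B_NW, B_SW ∈ ℝ, set B_c := (B_NE + B_SE + B_NW + B_SW)/4, and let w̄ ∈ ℝ with w̄ ≥ B_c. Define corrected corner values ẘ_NE := B_NE, ẘ_SE := B_SE, ẘ_NW := B_NW + 2(w̄ − B_c), ẘ_SW := B_SW + 2(w̄ − B_c). Then (i) (ẘ_NE + ẘ_SE + ẘ_NW + ẘ_SW)/4 = w̄, and (ii) ẘ_NE ≥ B_NE, ẘ_SE ≥ B_SE, ẘ_NW ≥ B_NW, ẘ_SW ≥ B_SW. Consequently, if ẘ and B̃ are bilinear functions on a cell C of size Δx×Δy centered at (x₀,y₀) taking these corner values at the corresponding corners of C, then the cell average of ẘ over C equals w̄ and ẘ(x,y) ≥ B̃(x,y) for all (x,y) ∈ C. -/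
lemma affine_int (p q a b : ℝ) : ∫ t in a..b, (p + q*t) = (b-a)*p + q*(b^2-a^2)/2 := by
  rw [intervalIntegral.integral_add (intervalIntegrable_const)
    ((intervalIntegral.intervalIntegrable_id).const_mul q)]
  rw [intervalIntegral.integral_const, intervalIntegral.integral_const_mul,
    integral_id]
  simp [smul_eq_mul]; ring

lemma bilin_inner (A B C D x a b : ℝ) :
    ∫ y in a..b, (A + B*x + C*y + D*x*y) = (b-a)*(A+B*x) + (C+D*x)*(b^2-a^2)/2 := by
  have h : ∀ y:ℝ, A + B*x + C*y + D*x*y = (A+B*x) + (C+D*x)*y := by intro y; ring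
  simp_rw [h]; exact affine_int _ _ _ _

lemma bilin_nonneg (A B C D xl xr yl yr : ℝ) (hx : xl < xr) (hy : yl < yr)
    (h1 : 0 ≤ A + B*xl + C*yl + D*xl*yl)
    (h2 : 0 ≤ A + B*xl + C*yr + D*xl*yr)
    (h3 : 0 ≤ A + B*xr + C*yl + D*xr*yl)
    (h4 : 0 ≤ A + B*xr + C*yr + D*xr*yr)
    (x y : ℝ) (hxm : x ∈ Set.Icc xl xr) (hym : y ∈ Set.Icc yl yr) :
    0 ≤ A + B*x + C*y + D*x*y := by
  obtain ⟨hx1, hx2⟩ := hxm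
  obtain ⟨hy1, hy2⟩ := hym
  have hdx : (0:ℝ) < xr - xl := by linarith
  have hdy : (0:ℝ) < yr - yl := by linarith
  have key : A + B*x + C*y + D*x*y =
      ((xr-x)*(yr-y)*(A + B*xl + C*yl + D*xl*yl)
      + (xr-x)*(y-yl)*(A + B*xl + C*yr + D*xl*yr)
      + (x-xl)*(yr-y)*(A + B*xr + C*yl + D*xr*yl)
      + (x-xl)*(y-yl)*(A + B*xr + C*yr + D*xr*yr)) / ((xr-xl)*(yr-yl)) := by
    field_simp
    ring
  rw [key]
  apply div_nonneg _ (by positivity)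
  have t1 : 0 ≤ (xr-x)*(yr-y) := mul_nonneg (by linarith) (by linarith)
  have t2 : 0 ≤ (xr-x)*(y-yl) := mul_nonneg (by linarith) (by linarith)
  have t3 : 0 ≤ (x-xl)*(yr-y) := mul_nonneg (by linarith) (by linarith)
  have t4 : 0 ≤ (x-xl)*(y-yl) := mul_nonneg (by linarith) (by linarith)
  have := mul_nonneg t1 h1
  have := mul_nonneg t2 h2
  have := mul_nonneg t3 h3
  have := mul_nonneg t4 h4
  linarith

/-- Case 2 positivity-preserving correction: two violated corners. The corrected
corner values are conservative and dominate the bottom corner values;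
consequently the corrected bilinear piece has cell average `wbar` and lies above
the bilinear bottom reconstruction on the whole cell. -/
theorem case2_positivity_correction
    (BNE BSE BNW BSW Bc wbar : ℝ)
    (hBc : Bc = (BNE + BSE + BNW + BSW) / 4)
    (hwbar : Bc ≤ wbar)
    (wNE wSE wNW wSW : ℝ)
    (hwNE : wNE = BNE)
    (hwSE : wSE = BSE)
    (hwNW : wNW = BNW + 2 * (wbar - Bc))
    (hwSW : wSW = BSW + 2 * (wbar - Bc))
    (x₀ y₀ Δx Δy : ℝ) (hΔx : 0 < Δx) (hΔy : 0 < Δy)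
    (aw bw cw dw aB bB cB dB : ℝ)
    (W Bt : ℝ → ℝ → ℝ)
    (hW : ∀ x y, W x y = aw + bw * x + cw * y + dw * x * y)
    (hBt : ∀ x y, Bt x y = aB + bB * x + cB * y + dB * x * y)
    (hWNE : W (x₀ + Δx / 2) (y₀ + Δy / 2) = wNE)
    (hWSE : W (x₀ + Δx / 2) (y₀ - Δy / 2) = wSE)
    (hWNW : W (x₀ - Δx / 2) (y₀ + Δy / 2) = wNW)
    (hWSW : W (x₀ - Δx / 2) (y₀ - Δy / 2) = wSW)
    (hBtNE : Bt (x₀ + Δx / 2) (y₀ + Δy / 2) = BNE)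
    (hBtSE : Bt (x₀ + Δx / 2) (y₀ - Δy / 2) = BSE)
    (hBtNW : Bt (x₀ - Δx / 2) (y₀ + Δy / 2) = BNW)
    (hBtSW : Bt (x₀ - Δx / 2) (y₀ - Δy / 2) = BSW) :
    (wNE + wSE + wNW + wSW) / 4 = wbar ∧
    BNE ≤ wNE ∧ BSE ≤ wSE ∧ BNW ≤ wNW ∧ BSW ≤ wSW ∧
    (1 / (Δx * Δy)) *
      (∫ x in (x₀ - Δx / 2)..(x₀ + Δx / 2),
        ∫ y in (y₀ - Δy / 2)..(y₀ + Δy / 2), W x y) = wbar ∧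
    (∀ x y, x ∈ Set.Icc (x₀ - Δx / 2) (x₀ + Δx / 2) →
      y ∈ Set.Icc (y₀ - Δy / 2) (y₀ + Δy / 2) → Bt x y ≤ W x y) := by
  have hsum : wNE + wSE + wNW + wSW = 4 * wbar := by
    rw [hwNE, hwSE, hwNW, hwSW, hBc]; ring
  have hNE' : aw + bw*(x₀ + Δx/2) + cw*(y₀ + Δy/2) + dw*(x₀ + Δx/2)*(y₀ + Δy/2) = wNE := by
    rw [← hWNE, hW]
  have hSE' : aw + bw*(x₀ + Δx/2) + cw*(y₀ - Δy/2) + dw*(x₀ + Δx/2)*(y₀ - Δy/2) = wSE := by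
    rw [← hWSE, hW]
  have hNW' : aw + bw*(x₀ - Δx/2) + cw*(y₀ + Δy/2) + dw*(x₀ - Δx/2)*(y₀ + Δy/2) = wNW := by
    rw [← hWNW, hW]
  have hSW' : aw + bw*(x₀ - Δx/2) + cw*(y₀ - Δy/2) + dw*(x₀ - Δx/2)*(y₀ - Δy/2) = wSW := by
    rw [← hWSW, hW]
  refine ⟨by linarith, le_of_eq hwNE.symm, le_of_eq hwSE.symm,
    by rw [hwNW]; linarith, by rw [hwSW]; linarith, ?_, ?_⟩
  · have hint : (∫ x in (x₀ - Δx / 2)..(x₀ + Δx / 2),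
        ∫ y in (y₀ - Δy / 2)..(y₀ + Δy / 2), W x y) = Δx * Δy * wbar := by
      simp_rw [hW, bilin_inner]
      have h2 : ∀ x : ℝ,
          ((y₀ + Δy/2) - (y₀ - Δy/2)) * (aw + bw*x)
            + (cw + dw*x) * (((y₀ + Δy/2)^2 - (y₀ - Δy/2)^2))/2
          = (Δy*aw + cw*Δy*y₀) + (Δy*bw + dw*Δy*y₀) * x := by
        intro x; ring
      simp_rw [h2, affine_int]
      linear_combination (Δx*Δy/4) * hNE' + (Δx*Δy/4) * hSE' + (Δx*Δy/4) * hNW'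
        + (Δx*Δy/4) * hSW' + (Δx*Δy/4) * hsum
    rw [hint]; field_simp
  · intro x y hxm hym
    have hBNE' : aB + bB*(x₀ + Δx/2) + cB*(y₀ + Δy/2) + dB*(x₀ + Δx/2)*(y₀ + Δy/2) = BNE := by
      rw [← hBtNE, hBt]
    have hBSE' : aB + bB*(x₀ + Δx/2) + cB*(y₀ - Δy/2) + dB*(x₀ + Δx/2)*(y₀ - Δy/2) = BSE := by
      rw [← hBtSE, hBt]
    have hBNW' : aB + bB*(x₀ - Δx/2) + cB*(y₀ + Δy/2) + dB*(x₀ - Δx/2)*(y₀ + Δy/2) = BNW := by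
      rw [← hBtNW, hBt]
    have hBSW' : aB + bB*(x₀ - Δx/2) + cB*(y₀ - Δy/2) + dB*(x₀ - Δx/2)*(y₀ - Δy/2) = BSW := by
      rw [← hBtSW, hBt]
    have e1 : (aw-aB) + (bw-bB)*(x₀-Δx/2) + (cw-cB)*(y₀-Δy/2) + (dw-dB)*(x₀-Δx/2)*(y₀-Δy/2) = wSW - BSW := by
      linear_combination hSW' - hBSW'
    have e2 : (aw-aB) + (bw-bB)*(x₀-Δx/2) + (cw-cB)*(y₀+Δy/2) + (dw-dB)*(x₀-Δx/2)*(y₀+Δy/2) = wNW - BNW := by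
      linear_combination hNW' - hBNW'
    have e3 : (aw-aB) + (bw-bB)*(x₀+Δx/2) + (cw-cB)*(y₀-Δy/2) + (dw-dB)*(x₀+Δx/2)*(y₀-Δy/2) = wSE - BSE := by
      linear_combination hSE' - hBSE'
    have e4 : (aw-aB) + (bw-bB)*(x₀+Δx/2) + (cw-cB)*(y₀+Δy/2) + (dw-dB)*(x₀+Δx/2)*(y₀+Δy/2) = wNE - BNE := by
      linear_combination hNE' - hBNE'
    have h := bilin_nonneg (aw - aB) (bw - bB) (cw - cB) (dw - dB)
      (x₀ - Δx/2) (x₀ + Δx/2) (y₀ - Δy/2) (y₀ + Δy/2)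
      (by linarith) (by linarith)
      (by rw [e1]; rw [hwSW] at *; linarith) (by rw [e2]; rw [hwNW]; linarith)
      (by rw [e3, hwSE]; linarith) (by rw [e4, hwNE]; linarith)
      x y hxm hym
    have h' : 0 ≤ (aw + bw*x + cw*y + dw*x*y) - (aB + bB*x + cB*y + dB*x*y) := by
      linear_combination h
    rw [hW, hBt]; linarith
end

section
/- Let ε > 0, h > 0 and q ∈ ℝ, and define the desingularized velocity u := √2 · h · q / √(h⁴ + max{h⁴, ε}). Then (i) |u| ≤ |q| / h; (ii) if h⁴ ≥ ε then u = q / h exactly; and (iii) the recomputed discharge satisfies |h · u| ≤ |q|. -/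
/-- Properties of the desingularized velocity
`u = √2 h q / √(h⁴ + max{h⁴, ε})`: (i) `|u| ≤ |q|/h`; (ii) if `h⁴ ≥ ε` then
`u = q/h`; (iii) the recomputed discharge satisfies `|h u| ≤ |q|`. -/
theorem desingularized_velocity_properties
    (ε h q : ℝ) (hε : 0 < ε) (hh : 0 < h)
    (u : ℝ)
    (hu : u = Real.sqrt 2 * h * q / Real.sqrt (h ^ 4 + max (h ^ 4) ε)) :
    |u| ≤ |q| / h ∧ (ε ≤ h ^ 4 → u = q / h) ∧ |h * u| ≤ |q| := by
  have h4 : (0:ℝ) < h ^ 4 := by positivity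
  have hmax : h ^ 4 ≤ max (h ^ 4) ε := le_max_left _ _
  have hargpos : 0 < h ^ 4 + max (h ^ 4) ε := by linarith
  set D := Real.sqrt (h ^ 4 + max (h ^ 4) ε) with hD
  have hDpos : 0 < D := Real.sqrt_pos.mpr hargpos
  have hsq2 : Real.sqrt (2 * h ^ 4) = Real.sqrt 2 * h ^ 2 := by
    rw [Real.sqrt_mul (by norm_num : (0:ℝ) ≤ 2), show h ^ 4 = (h ^ 2) ^ 2 by ring,
      Real.sqrt_sq (by positivity)]
  have hden : Real.sqrt 2 * h ^ 2 ≤ D := by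
    rw [← hsq2]
    exact Real.sqrt_le_sqrt (by linarith)
  have hi : |u| ≤ |q| / h := by
    rw [hu, abs_div, abs_mul, abs_mul, abs_of_nonneg (Real.sqrt_nonneg 2),
      abs_of_pos hh, abs_of_pos hDpos]
    rw [div_le_div_iff₀ hDpos hh]
    have := mul_le_mul_of_nonneg_right hden (abs_nonneg q)
    nlinarith
  refine ⟨hi, ?_, ?_⟩
  · intro hle
    have hm : max (h ^ 4) ε = h ^ 4 := max_eq_left hle
    rw [hu, hD, hm, show h ^ 4 + h ^ 4 = 2 * h ^ 4 by ring, hsq2]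
    have hs2 : Real.sqrt 2 ≠ 0 := by positivity
    field_simp
  · rw [abs_mul, abs_of_pos hh]
    calc h * |u| ≤ h * (|q| / h) := by
          exact mul_le_mul_of_nonneg_left hi hh.le
      _ = |q| := by field_simp
end

section
/- (Well-balanced property at the lake-at-rest state.) Let g > 0, Δx > 0, Δy > 0 and ŵ ∈ ℝ. Let B_E, B_{W1}, B_{W2}, B_S, B_N ∈ ℝ be bottom-topography values at the five cell interfaces (east midpoint, the two west quarter points, south midpoint, north midpoint), each satisfying B < ŵ. At each interface set both one-sided water-surface values equal to ŵ, both one-sided discharges equal to 0, so by the local-speed formulas a⁺ = √(g(ŵ−B)) = −a⁻ (resp. b⁺ = √(g(ŵ−B)) = −b⁻), and define the central-upwind fluxes H^x = (a⁺F(U⁻) − a⁻F(U⁺))/(a⁺−a⁻) + (a⁺a⁻/(a⁺−a⁻))(U⁺−U⁻) with F(U) = (hu, (hu)²/(w−B) + (g/2)(w−B)², (hu)(hv)/(w−B)), and analogously H^y with G(U) = (hv, (hu)(hv)/(w−B), (hv)²/(w−B) + (g/2)(w−B)²). Define the source averages S² := (g/(2Δx))[(ŵ−B_E)² − (1/2)(ŵ−B_{W1})²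 − (1/2)(ŵ−B_{W2})²] and S³ := (g/(2Δy))[(ŵ−B_N)² − (ŵ−B_S)²]. Then each of the three components of −(H^x_E − (H^x_{W1}+H^x_{W2})/2)/Δx − (H^y_N − H^y_S)/Δy + (0, S², S³) equals zero; in particular every flux equals H^x = (0, (g/2)(ŵ−B)², 0) or H^y = (0, 0, (g/2)(ŵ−B)²) at its interface, and the semi-discrete scheme exactly preserves the lake-at-rest steady state. -/
/-- Well-balanced property at the lake-at-rest steady state: with all
reconstructed interface water-surface values equal to `wh` and all discharges
equal to zero, every central-upwind flux reduces to the pure hydrostatic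
pressure flux, and the flux terms exactly cancel the well-balanced source
quadrature, so the semi-discrete scheme preserves the steady state. -/
theorem well_balanced_lake_at_rest
    (g Δx Δy wh : ℝ) (hg : 0 < g) (hΔx : 0 < Δx) (hΔy : 0 < Δy)
    (BE BW1 BW2 BS BN : ℝ)
    (hBE : BE < wh) (hBW1 : BW1 < wh) (hBW2 : BW2 < wh)
    (hBS : BS < wh) (hBN : BN < wh)
    (F G : (ℝ × ℝ × ℝ) → ℝ → ℝ × ℝ × ℝ)
    (hF : ∀ U B, F U B =
      (U.2.1, U.2.1 ^ 2 / (U.1 - B) + g / 2 * (U.1 - B) ^ 2,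
        U.2.1 * U.2.2 / (U.1 - B)))
    (hG : ∀ U B, G U B =
      (U.2.2, U.2.1 * U.2.2 / (U.1 - B),
        U.2.2 ^ 2 / (U.1 - B) + g / 2 * (U.1 - B) ^ 2))
    (Hx Hy : ℝ → ℝ × ℝ × ℝ)
    -- central-upwind flux at an x-interface with bottom value B, where the
    -- one-sided values are U⁻ = U⁺ = (wh, 0, 0) and the one-sided speeds are
    -- a⁺ = √(g(wh−B)) = −a⁻
    (hHx : ∀ B, Hx B =
      (Real.sqrt (g * (wh - B)) - -Real.sqrt (g * (wh - B)))⁻¹ •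
          (Real.sqrt (g * (wh - B)) • F (wh, 0, 0) B
            - (-Real.sqrt (g * (wh - B))) • F (wh, 0, 0) B)
        + ((Real.sqrt (g * (wh - B)) * -Real.sqrt (g * (wh - B)))
            / (Real.sqrt (g * (wh - B)) - -Real.sqrt (g * (wh - B)))) •
          ((wh, 0, 0) - (wh, 0, 0) : ℝ × ℝ × ℝ))
    (hHy : ∀ B, Hy B =
      (Real.sqrt (g * (wh - B)) - -Real.sqrt (g * (wh - B)))⁻¹ •
          (Real.sqrt (g * (wh - B)) • G (wh, 0, 0) B
            - (-Real.sqrt (g * (wh - B))) • G (wh, 0, 0) B)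
        + ((Real.sqrt (g * (wh - B)) * -Real.sqrt (g * (wh - B)))
            / (Real.sqrt (g * (wh - B)) - -Real.sqrt (g * (wh - B)))) •
          ((wh, 0, 0) - (wh, 0, 0) : ℝ × ℝ × ℝ))
    (S2 S3 : ℝ)
    (hS2 : S2 = g / (2 * Δx) * ((wh - BE) ^ 2
      - (1 / 2) * (wh - BW1) ^ 2 - (1 / 2) * (wh - BW2) ^ 2))
    (hS3 : S3 = g / (2 * Δy) * ((wh - BN) ^ 2 - (wh - BS) ^ 2)) :
    (∀ B : ℝ, B < wh → Hx B = (0, g / 2 * (wh - B) ^ 2, 0)) ∧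
    (∀ B : ℝ, B < wh → Hy B = (0, 0, g / 2 * (wh - B) ^ 2)) ∧
    -(Δx⁻¹ • (Hx BE - (2 : ℝ)⁻¹ • (Hx BW1 + Hx BW2)))
      - Δy⁻¹ • (Hy BN - Hy BS) + ((0 : ℝ), S2, S3) = (0, 0, 0) := by
  have flux : ∀ (B : ℝ), B < wh → ∀ (V : ℝ × ℝ × ℝ),
      (Real.sqrt (g * (wh - B)) - -Real.sqrt (g * (wh - B)))⁻¹ •
          (Real.sqrt (g * (wh - B)) • V - (-Real.sqrt (g * (wh - B))) • V)
        + ((Real.sqrt (g * (wh - B)) * -Real.sqrt (g * (wh - B)))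
            / (Real.sqrt (g * (wh - B)) - -Real.sqrt (g * (wh - B)))) •
          ((wh, 0, 0) - (wh, 0, 0) : ℝ × ℝ × ℝ) = V := by
    intro B hB V
    have hpos : 0 < Real.sqrt (g * (wh - B)) :=
      Real.sqrt_pos.2 (mul_pos hg (by linarith))
    have hne : Real.sqrt (g * (wh - B)) - -Real.sqrt (g * (wh - B)) ≠ 0 := by
      have := hpos; intro h; nlinarith
    rw [sub_self, smul_zero, add_zero, ← sub_smul, inv_smul_smul₀ hne]
  have hBne : ∀ B : ℝ, B < wh → wh - B ≠ 0 := fun B hB => by linarith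
  have hx : ∀ B : ℝ, B < wh → Hx B = (0, g / 2 * (wh - B) ^ 2, 0) := by
    intro B hB
    rw [hHx, flux B hB, hF]
    simp [hBne B hB]
  have hy : ∀ B : ℝ, B < wh → Hy B = (0, 0, g / 2 * (wh - B) ^ 2) := by
    intro B hB
    rw [hHy, flux B hB, hG]
    simp [hBne B hB]
  refine ⟨hx, hy, ?_⟩
  rw [hx BE hBE, hx BW1 hBW1, hx BW2 hBW2, hy BS hBS, hy BN hBN, hS2, hS3]
  have hΔx' : Δx ≠ 0 := ne_of_gt hΔx
  have hΔy' : Δy ≠ 0 := ne_of_gt hΔy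
  simp only [Prod.smul_mk, Prod.mk_add_mk, Prod.mk_sub_mk, Prod.neg_mk,
    smul_eq_mul, Prod.mk.injEq]
  refine ⟨by ring, ?_, ?_⟩ <;> field_simp <;> ring
end

section
/- (Positivity preservation under the CFL condition.) Let g > 0 and Δt, Δx, Δy > 0. Consider five interfaces of a quadtree cell: east E, two west quarter-interfaces W1, W2, south S and north N. At each x-interface I ∈ {E, W1, W2} let h_I⁻, h_I⁺ ≥ 0 and u_I⁻, u_I⁺ ∈ ℝ be given, set a_I⁺ := max{u_I⁺ + √(g h_I⁺), u_I⁻ + √(g h_I⁻), 0} and a_I⁻ := min{u_I⁺ − √(g h_I⁺), u_I⁻ − √(g h_I⁻), 0}, assume a_I⁺ − a_I⁻ > 0, and define the first-component flux H_I := [a_I⁺ h_I⁻ u_I⁻ − a_I⁻ h_I⁺ u_I⁺]/(a_I⁺ − a_I⁻) + [a_I⁺ a_I⁻/(a_I⁺ − a_I⁻)](h_I⁺ − h_I⁻). At each y-interface J ∈ {S, N} let h_J⁻, h_J⁺ ≥ 0 and v_J⁻, v_J⁺ ∈ ℝ be given, define b_J± analogously with v in place of u, assume b_J⁺ − b_J⁻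 > 0, and define H_J := [b_J⁺ h_J⁻ v_J⁻ − b_J⁻ h_J⁺ v_J⁺]/(b_J⁺ − b_J⁻) + [b_J⁺ b_J⁻/(b_J⁺ − b_J⁻)](h_J⁺ − h_J⁻). Set h̄ⁿ := (1/4)[(1/2)(h_{W1}⁺ + h_{W2}⁺) + h_E⁻ + h_S⁺ + h_N⁻] and h̄ⁿ⁺¹ := h̄ⁿ − (Δt/Δx)[H_E − (H_{W1} + H_{W2})/2] − (Δt/Δy)[H_N − H_S]. If the CFL condition Δt · max{a_I⁺, −a_I⁻} ≤ Δx/4 holds for each I ∈ {E, W1, W2} and Δt · max{b_J⁺, −b_J⁻} ≤ Δy/4 holds for each J ∈ {S, N}, then h̄ⁿ⁺¹ ≥ 0. -/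
lemma cu_flux_bounds (g hm hp um up ap am : ℝ) (hhm : 0 ≤ hm) (hhp : 0 ≤ hp)
    (hap : ap = max (up + Real.sqrt (g * hp)) (max (um + Real.sqrt (g * hm)) 0))
    (ham : am = min (up - Real.sqrt (g * hp)) (min (um - Real.sqrt (g * hm)) 0))
    (ha : 0 < ap - am) :
    am * hp ≤ (ap * (hm * um) - am * (hp * up)) / (ap - am)
      + (ap * am / (ap - am)) * (hp - hm)
    ∧ (ap * (hm * um) - am * (hp * up)) / (ap - am)
      + (ap * am / (ap - am)) * (hp - hm) ≤ ap * hm := by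
  have sp : 0 ≤ Real.sqrt (g * hp) := Real.sqrt_nonneg _
  have sm : 0 ≤ Real.sqrt (g * hm) := Real.sqrt_nonneg _
  have hap0 : 0 ≤ ap := hap ▸ le_max_of_le_right (le_max_right _ _)
  have ham0 : am ≤ 0 := ham ▸ min_le_of_right_le (min_le_right _ _)
  have hum : um ≤ ap := by
    have : um + Real.sqrt (g * hm) ≤ ap := hap ▸ le_max_of_le_right (le_max_left _ _)
    linarith
  have hup : up ≤ ap := by
    have : up + Real.sqrt (g * hp) ≤ ap := hap ▸ le_max_left _ _
    linarith
  have hum' : am ≤ um := by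
    have : am ≤ um - Real.sqrt (g * hm) := ham ▸ min_le_of_right_le (min_le_left _ _)
    linarith
  have hup' : am ≤ up := by
    have : am ≤ up - Real.sqrt (g * hp) := ham ▸ min_le_left _ _
    linarith
  have key : (ap * (hm * um) - am * (hp * up)) / (ap - am)
      + (ap * am / (ap - am)) * (hp - hm)
      = (ap * hm * (um - am) - am * hp * (up - ap)) / (ap - am) := by
    field_simp
    ring
  rw [key]
  constructor
  · rw [le_div_iff₀ ha]
    nlinarith [mul_nonneg (mul_nonneg hap0 hhm) (sub_nonneg.2 hum'),
      mul_nonneg (mul_nonneg (neg_nonneg.2 ham0) hhp) (sub_nonneg.2 hup')]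
  · rw [div_le_iff₀ ha]
    nlinarith [mul_nonneg (mul_nonneg (neg_nonneg.2 ham0) hhp) (sub_nonneg.2 hup),
      mul_nonneg (mul_nonneg hap0 hhm) (sub_nonneg.2 hum)]

lemma term_upper (Δt Δ H a h : ℝ) (hΔt : 0 < Δt) (hΔ : 0 < Δ) (hh : 0 ≤ h)
    (hH : H ≤ a * h) (hcfl : Δt * a ≤ Δ / 4) : (Δt / Δ) * H ≤ h / 4 := by
  rw [div_mul_eq_mul_div, div_le_iff₀ hΔ]
  nlinarith [mul_le_mul_of_nonneg_left hH hΔt.le, mul_le_mul_of_nonneg_right hcfl hh]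

lemma term_lower (Δt Δ H a h : ℝ) (hΔt : 0 < Δt) (hΔ : 0 < Δ) (hh : 0 ≤ h)
    (hH : a * h ≤ H) (hcfl : Δt * (-a) ≤ Δ / 4) : -(h / 4) ≤ (Δt / Δ) * H := by
  rw [div_mul_eq_mul_div, le_div_iff₀ hΔ]
  nlinarith [mul_le_mul_of_nonneg_left hH hΔt.le, mul_le_mul_of_nonneg_right hcfl hh]


/-- Positivity preservation of the forward Euler step of the central-upwind
quadtree scheme under the CFL condition, for a cell with two half-size left
neighbors: if all reconstructed interface depths are nonnegative and the
timestep satisfies the CFL restriction, then the new depth cell average is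
nonnegative. -/
theorem positivity_preserving_forward_euler
    (g Δt Δx Δy : ℝ) (hg : 0 < g) (hΔt : 0 < Δt) (hΔx : 0 < Δx) (hΔy : 0 < Δy)
    -- east interface
    (hEm hEp uEm uEp aEp aEm HE : ℝ)
    (hhEm : 0 ≤ hEm) (hhEp : 0 ≤ hEp)
    (haEp : aEp = max (uEp + Real.sqrt (g * hEp)) (max (uEm + Real.sqrt (g * hEm)) 0))
    (haEm : aEm = min (uEp - Real.sqrt (g * hEp)) (min (uEm - Real.sqrt (g * hEm)) 0))
    (haE : 0 < aEp - aEm)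
    (hHE : HE = (aEp * (hEm * uEm) - aEm * (hEp * uEp)) / (aEp - aEm)
      + (aEp * aEm / (aEp - aEm)) * (hEp - hEm))
    -- first west quarter-interface
    (hW1m hW1p uW1m uW1p aW1p aW1m HW1 : ℝ)
    (hhW1m : 0 ≤ hW1m) (hhW1p : 0 ≤ hW1p)
    (haW1p : aW1p = max (uW1p + Real.sqrt (g * hW1p)) (max (uW1m + Real.sqrt (g * hW1m)) 0))
    (haW1m : aW1m = min (uW1p - Real.sqrt (g * hW1p)) (min (uW1m - Real.sqrt (g * hW1m)) 0))
    (haW1 : 0 < aW1p - aW1m)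
    (hHW1 : HW1 = (aW1p * (hW1m * uW1m) - aW1m * (hW1p * uW1p)) / (aW1p - aW1m)
      + (aW1p * aW1m / (aW1p - aW1m)) * (hW1p - hW1m))
    -- second west quarter-interface
    (hW2m hW2p uW2m uW2p aW2p aW2m HW2 : ℝ)
    (hhW2m : 0 ≤ hW2m) (hhW2p : 0 ≤ hW2p)
    (haW2p : aW2p = max (uW2p + Real.sqrt (g * hW2p)) (max (uW2m + Real.sqrt (g * hW2m)) 0))
    (haW2m : aW2m = min (uW2p - Real.sqrt (g * hW2p)) (min (uW2m - Real.sqrt (g * hW2m)) 0))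
    (haW2 : 0 < aW2p - aW2m)
    (hHW2 : HW2 = (aW2p * (hW2m * uW2m) - aW2m * (hW2p * uW2p)) / (aW2p - aW2m)
      + (aW2p * aW2m / (aW2p - aW2m)) * (hW2p - hW2m))
    -- south interface
    (hSm hSp vSm vSp bSp bSm HS : ℝ)
    (hhSm : 0 ≤ hSm) (hhSp : 0 ≤ hSp)
    (hbSp : bSp = max (vSp + Real.sqrt (g * hSp)) (max (vSm + Real.sqrt (g * hSm)) 0))
    (hbSm : bSm = min (vSp - Real.sqrt (g * hSp)) (min (vSm - Real.sqrt (g * hSm)) 0))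
    (hbS : 0 < bSp - bSm)
    (hHS : HS = (bSp * (hSm * vSm) - bSm * (hSp * vSp)) / (bSp - bSm)
      + (bSp * bSm / (bSp - bSm)) * (hSp - hSm))
    -- north interface
    (hNm hNp vNm vNp bNp bNm HN : ℝ)
    (hhNm : 0 ≤ hNm) (hhNp : 0 ≤ hNp)
    (hbNp : bNp = max (vNp + Real.sqrt (g * hNp)) (max (vNm + Real.sqrt (g * hNm)) 0))
    (hbNm : bNm = min (vNp - Real.sqrt (g * hNp)) (min (vNm - Real.sqrt (g * hNm)) 0))
    (hbN : 0 < bNp - bNm)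
    (hHN : HN = (bNp * (hNm * vNm) - bNm * (hNp * vNp)) / (bNp - bNm)
      + (bNp * bNm / (bNp - bNm)) * (hNp - hNm))
    -- old and new cell averages of the depth
    (hbarn hbarnp1 : ℝ)
    (hhbarn : hbarn = (1 / 4) * ((1 / 2) * (hW1p + hW2p) + hEm + hSp + hNm))
    (hhbarnp1 : hbarnp1 = hbarn - (Δt / Δx) * (HE - (HW1 + HW2) / 2)
      - (Δt / Δy) * (HN - HS))
    -- CFL conditions
    (cflE : Δt * max aEp (-aEm) ≤ Δx / 4)
    (cflW1 : Δt * max aW1p (-aW1m) ≤ Δx / 4)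
    (cflW2 : Δt * max aW2p (-aW2m) ≤ Δx / 4)
    (cflS : Δt * max bSp (-bSm) ≤ Δy / 4)
    (cflN : Δt * max bNp (-bNm) ≤ Δy / 4) :
    0 ≤ hbarnp1 := by
  obtain ⟨lE, uE⟩ := cu_flux_bounds g hEm hEp uEm uEp aEp aEm hhEm hhEp haEp haEm haE
  obtain ⟨lW1, uW1⟩ := cu_flux_bounds g hW1m hW1p uW1m uW1p aW1p aW1m hhW1m hhW1p haW1p haW1m haW1
  obtain ⟨lW2, uW2⟩ := cu_flux_bounds g hW2m hW2p uW2m uW2p aW2p aW2m hhW2m hhW2p haW2p haW2m haW2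
  obtain ⟨lS, uS⟩ := cu_flux_bounds g hSm hSp vSm vSp bSp bSm hhSm hhSp hbSp hbSm hbS
  obtain ⟨lN, uN⟩ := cu_flux_bounds g hNm hNp vNm vNp bNp bNm hhNm hhNp hbNp hbNm hbN
  have cE : Δt * aEp ≤ Δx / 4 :=
    le_trans (mul_le_mul_of_nonneg_left (le_max_left _ _) hΔt.le) cflE
  have cW1 : Δt * (-aW1m) ≤ Δx / 4 :=
    le_trans (mul_le_mul_of_nonneg_left (le_max_right _ _) hΔt.le) cflW1
  have cW2 : Δt * (-aW2m) ≤ Δx / 4 :=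
    le_trans (mul_le_mul_of_nonneg_left (le_max_right _ _) hΔt.le) cflW2
  have cS : Δt * (-bSm) ≤ Δy / 4 :=
    le_trans (mul_le_mul_of_nonneg_left (le_max_right _ _) hΔt.le) cflS
  have cN : Δt * bNp ≤ Δy / 4 :=
    le_trans (mul_le_mul_of_nonneg_left (le_max_left _ _) hΔt.le) cflN
  have tE : (Δt / Δx) * HE ≤ hEm / 4 :=
    term_upper Δt Δx HE aEp hEm hΔt hΔx hhEm (hHE ▸ uE) cE
  have tW1 : -(hW1p / 4) ≤ (Δt / Δx) * HW1 :=
    term_lower Δt Δx HW1 aW1m hW1p hΔt hΔx hhW1p (hHW1 ▸ lW1) cW1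
  have tW2 : -(hW2p / 4) ≤ (Δt / Δx) * HW2 :=
    term_lower Δt Δx HW2 aW2m hW2p hΔt hΔx hhW2p (hHW2 ▸ lW2) cW2
  have tS : -(hSp / 4) ≤ (Δt / Δy) * HS :=
    term_lower Δt Δy HS bSm hSp hΔt hΔy hhSp (hHS ▸ lS) cS
  have tN : (Δt / Δy) * HN ≤ hNm / 4 :=
    term_upper Δt Δy HN bNp hNm hΔt hΔy hhNm (hHN ▸ uN) cN
  rw [hhbarnp1, hhbarn]
  have e1 : (Δt / Δx) * (HE - (HW1 + HW2) / 2)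
      = (Δt / Δx) * HE - ((Δt / Δx) * HW1 + (Δt / Δx) * HW2) / 2 := by ring
  have e2 : (Δt / Δy) * (HN - HS) = (Δt / Δy) * HN - (Δt / Δy) * HS := by ring
  rw [e1, e2]
  linarith
end
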